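/- (Shuffle relation, (1,1)×(1) case) For every prime p > 3, in (ZMod p)[t]: £^{OY}_{(1,1)}(t) \cdot £_1(t) = 3 £^{OY}_{(1,1,1)}(t) - (Z^{(1)}(1,2) t^p + Z^{(2)}(1,2) t^{2p}), where Z^{(i)}(1,2) := \sum_{0<l_1,l_2<p, (i-1)p < l_1+l_2 < ip} l_1^{-1}(l_1+l_2)^{-2} in ZMod p. -/

import Mathlib

open Polynomial Finset

/-- £₁(t). -/
noncomputable def L1 (p : ℕ) : Polynomial (ZMod p) :=
  ∑ l ∈ Ico 1 p, C ((l : ZMod p)⁻¹) * X ^ l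

/-- £^OY_{(1,1)}(t). -/
noncomputable def OY11 (p : ℕ) : Polynomial (ZMod p) :=
  ∑ l1 ∈ Ico 1 p, ∑ l2 ∈ Ico 1 p,
    if ¬ p ∣ (l1 + l2) then
      C ((l1 : ZMod p)⁻¹ * ((l1 + l2 : ℕ) : ZMod p)⁻¹) * X ^ (l1 + l2)
    else 0

/-- £^OY_{(1,1,1)}(t). -/
noncomputable def OY111 (p : ℕ) : Polynomial (ZMod p) :=
  ∑ l1 ∈ Ico 1 p, ∑ l2 ∈ Ico 1 p, ∑ l3 ∈ Ico 1 p,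
    if ¬ p ∣ l1 ∧ ¬ p ∣ (l1 + l2) ∧ ¬ p ∣ (l1 + l2 + l3) then
      C ((l1 : ZMod p)⁻¹ * ((l1 + l2 : ℕ) : ZMod p)⁻¹ * ((l1 + l2 + l3 : ℕ) : ZMod p)⁻¹)
        * X ^ (l1 + l2 + l3)
    else 0

/-- Z^(i)(1,2) : the sum of l1⁻¹(l1+l2)⁻² over 0 < l1,l2 < p with (i-1)p < l1+l2 < ip. -/
def Zi12 (p i : ℕ) : ZMod p :=
  ∑ l1 ∈ Ico 1 p, ∑ l2 ∈ Ico 1 p,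
    if (i - 1) * p < l1 + l2 ∧ l1 + l2 < i * p then
      (l1 : ZMod p)⁻¹ * (((l1 + l2 : ℕ) : ZMod p)⁻¹) ^ 2
    else 0

/-!
Write `x, y, z` for the residues of `a, b, c`; the product is `∑ x⁻¹ (x+y)⁻¹ z⁻¹ t^(a+b+c)` over
`0 < a, b, c < p`. As in the shuffle proof for multiple harmonic sums, the partial fractions
`1/((x+y) z) = 1/((x+y)(x+y+z)) + 1/(z (x+y+z))` and `1/(x z) = 1/(x (x+z)) + 1/(z (x+z))` turn it
into three copies of the `(1,1,1)`-sum, once the summation variables are permuted (harmless, since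
the exponent `a+b+c` is symmetric). In `ZMod p` these identities fail where a denominator
vanishes. The terms with `p ∣ a+b+c` have `c ≡ -(a+b)` and `a+b+c ∈ {p, 2p}`, and give
`-Z^{(i)}(1,2) t^(ip)`. The terms with `p ∣ a+c` or `p ∣ b+c` reduce to `t^(p+b)` times sums
over `a` of `a⁻¹` and `a⁻²`, which vanish for `p > 3`.
-/

section FieldIdentities

variable {K : Type*} [Field K] [DecidableEq K]

def oyTerm (x y z : K) : K := x⁻¹ * (x + y)⁻¹ * (x + y + z)⁻¹

-- The two partial fractions of the shuffle argument; each `if` corrects for a vanishing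
-- denominator.
theorem inv_mul_inv_mul_inv_eq_oyTerm_add {x y z : K} (hx : x ≠ 0) (hy : y ≠ 0) (hz : z ≠ 0) :
    x⁻¹ * (x + y)⁻¹ * z⁻¹ =
      oyTerm x y z + (if x + y = 0 then 0 else oyTerm x z y)
        + (if x + y = 0 then 0 else oyTerm z x y)
        + (if x + z = 0 then (if x + y = 0 then 0 else x⁻¹ * z⁻¹ * y⁻¹) else 0)
        + if x + y + z = 0 then x⁻¹ * (x + y)⁻¹ * z⁻¹ else 0 := by
  unfold oyTerm
  by_cases hxy : x + y = 0
  · simp [hxy]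
  by_cases hN : x + y + z = 0
  · have hxz : x + z ≠ 0 := fun h => hy (by linear_combination hN - h)
    simp [hN, hxz, show x + z + y = 0 by linear_combination hN,
      show z + x + y = 0 by linear_combination hN]
  have h1 : x + z + y ≠ 0 := fun h => hN (by linear_combination h)
  have h2 : z + x + y ≠ 0 := fun h => hN (by linear_combination h)
  by_cases hxz : x + z = 0
  · obtain rfl : z = -x := by linear_combination hxz
    simp only [hxy, hxz, hN, if_true, if_false, add_comm (-x) x, inv_zero]
    field_simp
    ring
  · have h4 : z + x ≠ 0 := by rwa [add_comm]
    simp only [hxy, hxz, hN, if_false, add_zero]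
    field_simp
    ring

theorem oyTerm_correction_eq {x y : K} (hx : x ≠ 0) (hy : y ≠ 0) :
    (if x + y = 0 then 0 else x⁻¹ * (-x)⁻¹ * y⁻¹) - oyTerm x y (-x) - oyTerm y x (-x) =
      -(x⁻¹ ^ 2 * y⁻¹ + x⁻¹ * y⁻¹ ^ 2) := by
  unfold oyTerm
  rw [show x + y + -x = y by ring, show y + x + -x = y by ring, add_comm y x]
  by_cases hxy : x + y = 0
  · obtain rfl : y = -x := by linear_combination hxy
    simp only [hxy, if_true, inv_zero, inv_neg]
    ring
  · simp only [hxy, if_false]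
    field_simp
    ring

end FieldIdentities

section ZModSums

variable {p : ℕ}

theorem natCast_ne_zero_of_mem_Ico {a : ℕ} (ha : a ∈ Ico 1 p) : (a : ZMod p) ≠ 0 := by
  rw [Ne, ZMod.natCast_eq_zero_iff]
  exact Nat.not_dvd_of_pos_of_lt (mem_Ico.1 ha).1 (mem_Ico.1 ha).2

theorem sum_Ico_natCast_eq_sum_univ [NeZero p] {M : Type*} [AddCommMonoid M]
    (f : ZMod p → M) (hf : f 0 = 0) : ∑ a ∈ Ico 1 p, f a = ∑ x, f x := by
  rw [← Finset.sum_erase univ hf]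
  refine Finset.sum_nbij' (fun a => (a : ZMod p)) ZMod.val ?_ ?_ ?_ ?_ fun _ _ => rfl
  · exact fun a ha => mem_erase.2 ⟨natCast_ne_zero_of_mem_Ico ha, mem_univ _⟩
  · intro x hx
    have hx0 : x.val ≠ 0 := fun h => (mem_erase.1 hx).1 ((ZMod.val_eq_zero x).1 h)
    exact mem_Ico.2 ⟨Nat.one_le_iff_ne_zero.2 hx0, ZMod.val_lt x⟩
  · exact fun a ha => ZMod.val_cast_of_lt (mem_Ico.1 ha).2
  · exact fun x _ => ZMod.natCast_zmod_val x

theorem sum_Ico_inv_pow_eq_zero [Fact p.Prime] {k : ℕ} (hk : 0 < k) (hkp : k < p - 1) :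
    ∑ a ∈ Ico 1 p, (a : ZMod p)⁻¹ ^ k = 0 := by
  rw [sum_Ico_natCast_eq_sum_univ (fun x => x⁻¹ ^ k) (by simp [hk.ne']),
    Fintype.sum_equiv (Equiv.inv (ZMod p)) (fun x => x⁻¹ ^ k) (fun x => x ^ k) fun _ => rfl]
  exact FiniteField.sum_pow_lt_card_sub_one (ZMod p) k (by rwa [ZMod.card])

theorem natCast_sub_mod_eq_neg [NeZero p] (s : ℕ) : ((p - s % p : ℕ) : ZMod p) = -s := by
  rw [Nat.cast_sub (Nat.mod_lt s (NeZero.pos p)).le, ZMod.natCast_self, ZMod.natCast_mod, zero_sub]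

theorem sum_Ico_ite_dvd_add [NeZero p] {M : Type*} [AddCommMonoid M] {s : ℕ}
    (hs : ¬ p ∣ s) (g : ℕ → M) :
    ∑ c ∈ Ico 1 p, (if p ∣ s + c then g c else 0) = g (p - s % p) := by
  have hmod : 0 < s % p := Nat.pos_of_ne_zero fun h => hs (Nat.dvd_of_mod_eq_zero h)
  have hlt : s % p < p := Nat.mod_lt s (NeZero.pos p)
  have hiff : ∀ c ∈ Ico 1 p, p ∣ s + c ↔ c = p - s % p := fun c hc => by
    rw [← ZMod.natCast_eq_zero_iff, Nat.cast_add, add_comm, add_eq_zero_iff_eq_neg,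
      ← natCast_sub_mod_eq_neg, ZMod.natCast_eq_natCast_iff', Nat.mod_eq_of_lt (mem_Ico.1 hc).2,
      Nat.mod_eq_of_lt (by omega)]
  rw [sum_congr rfl fun c hc => if_congr (hiff c hc) rfl rfl, sum_ite_eq' (Ico 1 p),
    if_pos (mem_Ico.2 ⟨by omega, by omega⟩)]

end ZModSums

noncomputable def tripleSum (p : ℕ) : (ZMod p → ZMod p → ZMod p → ZMod p) →+ (ZMod p)[X] :=
  AddMonoidHom.mk'
    (fun f => ∑ a ∈ Ico 1 p, ∑ b ∈ Ico 1 p, ∑ c ∈ Ico 1 p, C (f a b c) * X ^ (a + b + c))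
    fun f g => by simp only [Pi.add_apply, C_add, add_mul, sum_add_distrib]

namespace tripleSum

variable {p : ℕ}

theorem apply (f : ZMod p → ZMod p → ZMod p → ZMod p) :
    tripleSum p f = ∑ a ∈ Ico 1 p, ∑ b ∈ Ico 1 p, ∑ c ∈ Ico 1 p, C (f a b c) * X ^ (a + b + c) :=
  rfl

theorem congr {f g : ZMod p → ZMod p → ZMod p → ZMod p}
    (h : ∀ x y z : ZMod p, x ≠ 0 → y ≠ 0 → z ≠ 0 → f x y z = g x y z) :
    tripleSum p f = tripleSum p g := by
  rw [apply, apply]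
  exact sum_congr rfl fun _ ha => sum_congr rfl fun _ hb => sum_congr rfl fun _ hc => by
    rw [h _ _ _ (natCast_ne_zero_of_mem_Ico ha) (natCast_ne_zero_of_mem_Ico hb)
      (natCast_ne_zero_of_mem_Ico hc)]

theorem comm12 (f : ZMod p → ZMod p → ZMod p → ZMod p) :
    tripleSum p (fun x y z => f y x z) = tripleSum p f := by
  rw [apply, apply, sum_comm]
  simp only [add_comm (_ : ℕ) (_ : ℕ)]

theorem comm23 (f : ZMod p → ZMod p → ZMod p → ZMod p) :
    tripleSum p (fun x y z => f x z y) = tripleSum p f := by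
  rw [apply, apply]
  refine sum_congr rfl fun a _ => ?_
  rw [sum_comm]
  simp only [add_right_comm a]

end tripleSum

section Shuffle

variable {p : ℕ}

-- The divisibility conditions in `OY11` and `OY111` only exclude terms that the junk value
-- `(0 : ZMod p)⁻¹ = 0` already kills.
theorem OY11_mul_L1 :
    OY11 p * L1 p = tripleSum p (fun x y z => x⁻¹ * (x + y)⁻¹ * z⁻¹) := by
  rw [OY11, L1, tripleSum.apply, sum_mul]
  refine sum_congr rfl fun a _ => ?_
  rw [sum_mul]
  refine sum_congr rfl fun b _ => ?_
  rw [ite_eq_left_iff.2 fun h => ?_, mul_sum]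
  · refine sum_congr rfl fun c _ => ?_
    simp only [Nat.cast_add, pow_add, map_mul]
    ring
  · rw [not_not, ← ZMod.natCast_eq_zero_iff] at h
    simp [h, ZMod.inv_zero]

theorem OY111_eq_tripleSum_oyTerm [Fact p.Prime] : OY111 p = tripleSum p oyTerm := by
  refine sum_congr rfl fun a _ => sum_congr rfl fun b _ => sum_congr rfl fun c _ => ?_
  rw [ite_eq_left_iff.2 fun h => ?_]
  · simp only [oyTerm, Nat.cast_add]
  · simp only [not_and_or, not_not, ← ZMod.natCast_eq_zero_iff] at h
    rcases h with h | h | h <;> simp [h]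

theorem tripleSum_ite_add_eq_zero [NeZero p] (g : ZMod p → ZMod p → ZMod p → ZMod p) :
    tripleSum p (fun x y z => if x + z = 0 then g x y z else 0) =
      ∑ a ∈ Ico 1 p, ∑ b ∈ Ico 1 p, C (g a b (-a)) * X ^ (p + b) := by
  rw [tripleSum.apply]
  refine sum_congr rfl fun a ha => sum_congr rfl fun b _ => ?_
  have ha' := mem_Ico.1 ha
  simp only [apply_ite C, map_zero, ite_mul, zero_mul, ← Nat.cast_add a, ZMod.natCast_eq_zero_iff]
  have hexp : a + b + (p - a % p) = p + b := by rw [Nat.mod_eq_of_lt ha'.2]; omega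
  rw [sum_Ico_ite_dvd_add (Nat.not_dvd_of_pos_of_lt ha'.1 ha'.2), natCast_sub_mod_eq_neg, hexp]

theorem sum_Ico_ite_dvd_add_add [Fact p.Prime] {a b : ℕ} (ha : a ∈ Ico 1 p) (hb : b ∈ Ico 1 p) :
    ∑ c ∈ Ico 1 p, (if p ∣ a + b + c then
        C ((a : ZMod p)⁻¹ * ((a + b : ℕ) : ZMod p)⁻¹ * (c : ZMod p)⁻¹) * X ^ (a + b + c) else 0) =
      -((if 0 < a + b ∧ a + b < p then
          C ((a : ZMod p)⁻¹ * ((a + b : ℕ) : ZMod p)⁻¹ ^ 2) * X ^ p else 0) +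
        if p < a + b ∧ a + b < 2 * p then
          C ((a : ZMod p)⁻¹ * ((a + b : ℕ) : ZMod p)⁻¹ ^ 2) * X ^ (2 * p) else 0) := by
  have ha' := mem_Ico.1 ha
  have hb' := mem_Ico.1 hb
  by_cases hd : p ∣ a + b
  · have hab : a + b = p := Nat.eq_of_dvd_of_lt_two_mul (by omega) hd (by omega)
    simp [hab]
  · rw [sum_Ico_ite_dvd_add hd, natCast_sub_mod_eq_neg]
    have hcoef : (a : ZMod p)⁻¹ * ((a + b : ℕ) : ZMod p)⁻¹ * (-((a + b : ℕ) : ZMod p))⁻¹ =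
        -((a : ZMod p)⁻¹ * ((a + b : ℕ) : ZMod p)⁻¹ ^ 2) := by
      rw [inv_neg]; ring
    rw [hcoef, map_neg, neg_mul, neg_inj]
    rcases lt_or_gt_of_ne (show a + b ≠ p from fun h => hd (h ▸ dvd_rfl)) with hlt | hgt
    · rw [Nat.mod_eq_of_lt hlt, if_pos (by omega), if_neg (by omega), add_zero,
        Nat.add_sub_cancel' hlt.le]
    · rw [Nat.mod_eq_sub_mod hgt.le, Nat.mod_eq_of_lt (by omega), if_neg (by omega),
        if_pos (by omega), zero_add, show a + b + (p - (a + b - p)) = 2 * p by omega]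

theorem tripleSum_ite_add_add_eq_zero [Fact p.Prime] :
    tripleSum p (fun x y z => if x + y + z = 0 then x⁻¹ * (x + y)⁻¹ * z⁻¹ else 0) =
      -(C (Zi12 p 1) * X ^ p + C (Zi12 p 2) * X ^ (2 * p)) := by
  rw [tripleSum.apply, Zi12, Zi12, map_sum, map_sum, sum_mul, sum_mul, ← sum_add_distrib,
    ← sum_neg_distrib]
  refine sum_congr rfl fun a ha => ?_
  rw [map_sum, map_sum, sum_mul, sum_mul, ← sum_add_distrib, ← sum_neg_distrib]
  refine sum_congr rfl fun b hb => ?_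
  simp only [apply_ite C, map_zero, ite_mul, zero_mul, ← Nat.cast_add, ZMod.natCast_eq_zero_iff,
    Nat.reduceSub, one_mul]
  exact sum_Ico_ite_dvd_add_add ha hb

theorem tripleSum_ite_oyTerm_comm23 [Fact p.Prime] :
    tripleSum p (fun x y z => if x + y = 0 then 0 else oyTerm x z y) =
      tripleSum p oyTerm - tripleSum p (fun x y z => if x + z = 0 then oyTerm x y z else 0) := by
  refine (tripleSum.comm23 fun x y z => if x + z = 0 then 0 else oyTerm x y z).trans ?_
  rw [← map_sub]
  congr 1
  funext x y z
  by_cases h : x + z = 0 <;> simp [h]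

theorem tripleSum_ite_oyTerm_rotate [Fact p.Prime] :
    tripleSum p (fun x y z => if x + y = 0 then 0 else oyTerm z x y) =
      tripleSum p oyTerm - tripleSum p (fun x y z => if x + z = 0 then oyTerm y x z else 0) := by
  refine (tripleSum.comm23 fun x y z => if x + z = 0 then 0 else oyTerm y x z).trans ?_
  refine (tripleSum.comm12 fun x y z => if y + z = 0 then 0 else oyTerm x y z).trans ?_
  rw [← tripleSum.comm12 (fun x y z => if x + z = 0 then oyTerm y x z else 0), ← map_sub]
  congr 1
  funext x y z
  by_cases h : y + z = 0 <;> simp [h]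

theorem tripleSum_correction_cancel [Fact p.Prime] (hp : 3 < p) :
    tripleSum p (fun x y z => if x + z = 0 then (if x + y = 0 then 0 else x⁻¹ * z⁻¹ * y⁻¹) else 0) =
      tripleSum p (fun x y z => if x + z = 0 then oyTerm x y z else 0) +
        tripleSum p (fun x y z => if x + z = 0 then oyTerm y x z else 0) := by
  rw [← sub_eq_zero, sub_add_eq_sub_sub, ← map_sub, ← map_sub]
  have hcombine :
      ((fun x y z => if x + z = 0 then (if x + y = 0 then 0 else x⁻¹ * z⁻¹ * y⁻¹) else 0) -
        (fun x y z => if x + z = 0 then oyTerm x y z else 0) -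
        fun x y z => if x + z = 0 then oyTerm y x z else 0) =
      fun x y z : ZMod p => if x + z = 0 then
        (if x + y = 0 then 0 else x⁻¹ * z⁻¹ * y⁻¹) - oyTerm x y z - oyTerm y x z else 0 := by
    funext x y z
    by_cases h : x + z = 0 <;> simp [h]
  rw [hcombine, tripleSum_ite_add_eq_zero, sum_comm]
  refine sum_eq_zero fun b hb => ?_
  have hinv : ∑ a ∈ Ico 1 p, (a : ZMod p)⁻¹ = 0 := by
    simpa using sum_Ico_inv_pow_eq_zero (p := p) one_pos (by omega)
  have hinv2 : ∑ a ∈ Ico 1 p, (a : ZMod p)⁻¹ ^ 2 = 0 :=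
    sum_Ico_inv_pow_eq_zero two_pos (by omega)
  rw [← sum_mul, ← map_sum, sum_congr rfl fun a ha =>
    oyTerm_correction_eq (natCast_ne_zero_of_mem_Ico ha) (natCast_ne_zero_of_mem_Ico hb),
    sum_neg_distrib, sum_add_distrib, ← sum_mul, ← sum_mul, hinv, hinv2]
  simp

theorem tripleSum_inv_mul_inv_mul_inv_eq [Fact p.Prime] :
    tripleSum p (fun x y z => x⁻¹ * (x + y)⁻¹ * z⁻¹) =
      tripleSum p oyTerm + tripleSum p (fun x y z => if x + y = 0 then 0 else oyTerm x z y)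
        + tripleSum p (fun x y z => if x + y = 0 then 0 else oyTerm z x y)
        + tripleSum p
          (fun x y z => if x + z = 0 then (if x + y = 0 then 0 else x⁻¹ * z⁻¹ * y⁻¹) else 0)
        + tripleSum p (fun x y z => if x + y + z = 0 then x⁻¹ * (x + y)⁻¹ * z⁻¹ else 0) := by
  simp only [← map_add]
  exact tripleSum.congr fun x y z hx hy hz => inv_mul_inv_mul_inv_eq_oyTerm_add hx hy hz

end Shuffle

theorem shuffle_one_one_times_one (p : ℕ) (hp : p.Prime) (h3 : 3 < p) :
    OY11 p * L1 p = 3 * OY111 p - (C (Zi12 p 1) * X ^ p + C (Zi12 p 2) * X ^ (2 * p)) := by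
  have := Fact.mk hp
  rw [OY11_mul_L1, tripleSum_inv_mul_inv_mul_inv_eq, tripleSum_ite_oyTerm_comm23,
    tripleSum_ite_oyTerm_rotate, tripleSum_correction_cancel h3, tripleSum_ite_add_add_eq_zero,
    OY111_eq_tripleSum_oyTerm]
  ring
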